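/- arXiv:1405.2642 — 4 statements merged into one kernel-verified Lean document; each statement's English description precedes it below -/
import Mathlib

section
/- (Representation theorem for revision.) Assume M ⊆ S and M is nonempty, and let r : Set W → Set W. Then r satisfies the revision postulates for (S,M) if and only if there exists a rational order ≤ for (S,M) such that r a = Min(a ∩ S, ≤) for every sentence a ⊆ W. -/
/-- `Min(F, ≤)`: elements of `F` with no strictly smaller element in `F`,
where `y < x` means `le y x ∧ ¬ le x y`. -/
def MinSet {W : Type*} (le : W → W → Prop) (F : Set W) : Set W :=
  {x | x ∈ F ∧ ¬ ∃ y ∈ F, le y x ∧ ¬ le x y}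

/-- `le` is a rational order for `(S, M)`. -/
def RationalOrder {W : Type*} (le : W → W → Prop) (S M : Set W) : Prop :=
  (∀ x ∈ S, le x x) ∧
  (∀ x ∈ S, ∀ y ∈ S, ∀ z ∈ S, le x y → le y z → le x z) ∧
  (∀ x ∈ S, ∀ y ∈ S, le x y ∨ le y x) ∧
  MinSet le S = M ∧
  (∀ F ⊆ S, F.Nonempty → (MinSet le F).Nonempty)

/-- `r` satisfies the revision postulates for `(S, M)`. -/
def RevisionPostulates {W : Type*} (S M : Set W) (r : Set W → Set W) : Prop :=
  ∀ a b : Set W,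
    r a ⊆ S ∧
    r a ⊆ a ∧
    ((a ∩ S).Nonempty ↔ (r a).Nonempty) ∧
    ((M ∩ a).Nonempty → r a = M ∩ a) ∧
    r a ∩ b ⊆ r (a ∩ b) ∧
    ((r a ∩ b).Nonempty → r (a ∩ b) ⊆ r a ∩ b)


/-!
For an order that is total on `S`, being minimal in `F ⊆ S` means lying below every element of
`F`; hence `Min(F ∩ b) = Min(F) ∩ b` as soon as the right-hand side is nonempty, and the two
inclusions of this identity are (∔6) and (∔7), while with `F = S` it is vacuity.

Conversely, a revision operator reveals an order: `x ≤ y` iff `x ∈ r {x, y}`. Postulates (∔6)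
and (∔7) applied with `b = {x, y}` show that `r a` is exactly the set of elements of `a ∩ S` below
every other one, i.e. `Min(a ∩ S, ≤)`; reflexivity, totality and transitivity of `≤` follow by
revising by one, two and three interpretations, and faithfulness is vacuity at `a = W`.
-/

namespace MinSet

variable {W : Type*}

theorem subset (le : W → W → Prop) (F : Set W) : MinSet le F ⊆ F := fun _ hx => hx.1

theorem inter_subset_inter (le : W → W → Prop) (F b : Set W) :
    MinSet le F ∩ b ⊆ MinSet le (F ∩ b) := by
  rintro x ⟨⟨hx, hmin⟩, hxb⟩
  exact ⟨⟨hx, hxb⟩, fun ⟨y, hy, hlt⟩ => hmin ⟨y, hy.1, hlt⟩⟩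

variable {le : W → W → Prop} {S F : Set W}

theorem mem_iff_forall_le (htot : ∀ x ∈ S, ∀ y ∈ S, le x y ∨ le y x) (hF : F ⊆ S) {x : W} :
    x ∈ MinSet le F ↔ x ∈ F ∧ ∀ y ∈ F, le x y := by
  refine ⟨fun ⟨hx, hmin⟩ => ⟨hx, fun y hy => ?_⟩, fun ⟨hx, hle⟩ => ⟨hx, ?_⟩⟩
  · by_contra hxy
    exact hmin ⟨y, hy, (htot x (hF hx) y (hF hy)).resolve_left hxy, hxy⟩
  · rintro ⟨y, hy, -, hxy⟩
    exact hxy (hle y hy)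

theorem inter_eq_of_nonempty (htrans : ∀ x ∈ S, ∀ y ∈ S, ∀ z ∈ S, le x y → le y z → le x z)
    (htot : ∀ x ∈ S, ∀ y ∈ S, le x y ∨ le y x) (hF : F ⊆ S) {b : Set W}
    (hne : (MinSet le F ∩ b).Nonempty) :
    MinSet le (F ∩ b) = MinSet le F ∩ b := by
  refine Set.Subset.antisymm ?_ (inter_subset_inter le F b)
  obtain ⟨w, hwF, hwb⟩ := hne
  rw [mem_iff_forall_le htot hF] at hwF
  intro z hz
  rw [mem_iff_forall_le htot (Set.inter_subset_left.trans hF)] at hz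
  obtain ⟨⟨hzF, hzb⟩, hzle⟩ := hz
  have hzw : le z w := hzle w ⟨hwF.1, hwb⟩
  refine ⟨(mem_iff_forall_le htot hF).2 ⟨hzF, fun y hy => ?_⟩, hzb⟩
  exact htrans z (hF hzF) w (hF hwF.1) y (hF hy) hzw (hwF.2 y hy)

end MinSet

theorem RationalOrder.revisionPostulates_minSet {W : Type*} {le : W → W → Prop} {S M : Set W}
    (hle : RationalOrder le S M) : RevisionPostulates S M (fun a => MinSet le (a ∩ S)) := by
  obtain ⟨-, htrans, htot, rfl, hmin⟩ := hle
  intro a b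
  have hS : a ∩ S ⊆ S := Set.inter_subset_right
  refine ⟨(MinSet.subset le _).trans hS, (MinSet.subset le _).trans Set.inter_subset_left,
    ⟨hmin _ hS, fun ⟨x, hx⟩ => ⟨x, hx.1⟩⟩, fun hne => ?_, ?_, fun hne => ?_⟩
  · dsimp only
    rw [Set.inter_comm a S, MinSet.inter_eq_of_nonempty htrans htot subset_rfl hne,
      Set.inter_comm]
  · simpa only [Set.inter_right_comm a b S] using MinSet.inter_subset_inter le (a ∩ S) b
  · dsimp only at hne ⊢
    rw [Set.inter_right_comm a b S, MinSet.inter_eq_of_nonempty htrans htot hS hne]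

def revealedLE {W : Type*} (r : Set W → Set W) (x y : W) : Prop := x ∈ r {x, y}

namespace RevisionPostulates

variable {W : Type*} {S M : Set W} {r : Set W → Set W} (hr : RevisionPostulates S M r)
include hr

theorem subset_inter (a : Set W) : r a ⊆ a ∩ S := fun _ hx => ⟨(hr a a).2.1 hx, (hr a a).1 hx⟩

theorem nonempty {a : Set W} (h : (a ∩ S).Nonempty) : (r a).Nonempty := ((hr a a).2.2.1).1 h

theorem revealedLE_of_mem {a : Set W} {x y : W} (hx : x ∈ r a) (hy : y ∈ a) :
    revealedLE r x y := by
  have h6 := (hr a {x, y}).2.2.2.2.1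
  rw [Set.inter_eq_self_of_subset_right (Set.pair_subset (hr.subset_inter a hx).1 hy)] at h6
  exact h6 ⟨hx, Set.mem_insert x _⟩

theorem mem_of_revealedLE {a : Set W} {x y : W} (hy : y ∈ r a) (hx : x ∈ a)
    (hxy : revealedLE r x y) : x ∈ r a := by
  have h7 := (hr a {x, y}).2.2.2.2.2 ⟨y, hy, Set.mem_insert_of_mem x rfl⟩
  rw [Set.inter_eq_self_of_subset_right (Set.pair_subset hx (hr.subset_inter a hy).1)] at h7
  exact (h7 hxy).1

theorem revealedLE_refl {x : W} (hx : x ∈ S) : revealedLE r x x := by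
  obtain ⟨w, hw⟩ := hr.nonempty (a := {x, x}) ⟨x, Set.mem_insert x _, hx⟩
  obtain rfl : w = x := by simpa using (hr.subset_inter _ hw).1
  exact hw

theorem revealedLE_total {x y : W} (hx : x ∈ S) (hy : y ∈ S) :
    revealedLE r x y ∨ revealedLE r y x := by
  obtain ⟨w, hw⟩ := hr.nonempty (a := {x, y}) ⟨x, Set.mem_insert x _, hx⟩
  rcases (hr.subset_inter _ hw).1 with rfl | rfl
  · exact Or.inl hw
  · exact Or.inr (by rwa [revealedLE, Set.pair_comm])

theorem revealedLE_trans {x y z : W} (hx : x ∈ S) (hxy : revealedLE r x y)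
    (hyz : revealedLE r y z) : revealedLE r x z := by
  set a : Set W := {x, y, z}
  have hxa : x ∈ a := by simp [a]
  have hya : y ∈ a := by simp [a]
  have hza : z ∈ a := by simp [a]
  have hy_x : y ∈ r a → x ∈ r a := fun h => hr.mem_of_revealedLE h hxa hxy
  have hz_y : z ∈ r a → y ∈ r a := fun h => hr.mem_of_revealedLE h hya hyz
  obtain ⟨w, hw⟩ := hr.nonempty ⟨x, hxa, hx⟩
  have hxr : x ∈ r a := by
    rcases (hr.subset_inter a hw).1 with rfl | rfl | rfl
    exacts [hw, hy_x hw, hy_x (hz_y hw)]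
  exact hr.revealedLE_of_mem hxr hza

theorem eq_minSet_revealedLE (a : Set W) : r a = MinSet (revealedLE r) (a ∩ S) := by
  ext x
  rw [MinSet.mem_iff_forall_le (fun _ hx _ hy => hr.revealedLE_total hx hy)
    Set.inter_subset_right]
  refine ⟨fun hx => ⟨hr.subset_inter a hx, fun y hy => hr.revealedLE_of_mem hx hy.1⟩, ?_⟩
  rintro ⟨hxaS, hle⟩
  obtain ⟨w, hw⟩ := hr.nonempty ⟨x, hxaS⟩
  exact hr.mem_of_revealedLE hw hxaS.1 (hle w (hr.subset_inter a hw))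

theorem rationalOrder_revealedLE (hM : M.Nonempty) : RationalOrder (revealedLE r) S M := by
  refine ⟨fun x hx => hr.revealedLE_refl hx, fun x hx y _ z _ => hr.revealedLE_trans hx,
    fun x hx y hy => hr.revealedLE_total hx hy, ?_, fun F hF hne => ?_⟩
  · have hvac : r Set.univ = M ∩ Set.univ := (hr Set.univ Set.univ).2.2.2.1 (by simpa using hM)
    rw [← Set.inter_univ M, ← hvac, hr.eq_minSet_revealedLE, Set.univ_inter]
  · rw [← Set.inter_eq_self_of_subset_left hF, ← hr.eq_minSet_revealedLE]
    exact hr.nonempty (by rwa [Set.inter_eq_self_of_subset_left hF])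

end RevisionPostulates

theorem revision_representation_general
    {W : Type*} (S M : Set W) (r : Set W → Set W)
    (hMne : M.Nonempty) :
    RevisionPostulates S M r ↔
      ∃ le : W → W → Prop, RationalOrder le S M ∧
        ∀ a : Set W, r a = MinSet le (a ∩ S) := by
  constructor
  · intro hr
    exact ⟨revealedLE r, hr.rationalOrder_revealedLE hMne, hr.eq_minSet_revealedLE⟩
  · rintro ⟨le, hle, hr⟩
    obtain rfl : r = fun a => MinSet le (a ∩ S) := funext hr
    exact hle.revisionPostulates_minSet

/-- Representation theorem for revision. -/
theorem revision_representation
    {W : Type*} (S M : Set W) (r : Set W → Set W)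
    (hMS : M ⊆ S) (hMne : M.Nonempty) :
    RevisionPostulates S M r ↔
      ∃ le : W → W → Prop, RationalOrder le S M ∧
        ∀ a : Set W, r a = MinSet le (a ∩ S) :=
  revision_representation_general S M r hMne
end

section
/- (Harper identity.) Assume M ⊆ S and let r : Set W → Set W satisfy the revision postulates for (S,M). Define the contraction operator c : Set W → Set W by the Harper identity c a = M ∪ r (W \ a) for every sentence a ⊆ W. Then c satisfies the contraction postulates for (S,M). -/
/-- `c` satisfies the contraction postulates for `(S, M)`. -/
def ContractionPostulates {W : Type*} (S M : Set W) (c : Set W → Set W) : Prop :=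
  ∀ a b : Set W,
    c a ⊆ S ∧
    ((S \ a).Nonempty → ¬ c a ⊆ a) ∧
    M ⊆ c a ∧
    (¬ M ⊆ a → c a = M) ∧
    c a ∩ a ⊆ M ∧
    c (a ∩ b) ⊆ c a ∪ c b ∧
    (¬ c (a ∩ b) ⊆ a → c a ⊆ c (a ∩ b))

def harperContraction {W : Type*} (M : Set W) (r : Set W → Set W) (a : Set W) : Set W :=
  M ∪ r aᶜ

theorem subset_harperContraction {W : Type*} {M : Set W} {r : Set W → Set W} (a : Set W) :
    M ⊆ harperContraction M r a :=
  Set.subset_union_left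

namespace RevisionPostulates

variable {W : Type*} {S M : Set W} {r : Set W → Set W}

theorem subset_consistent (hr : RevisionPostulates S M r) (a : Set W) : r a ⊆ S :=
  (hr a a).1

theorem subset (hr : RevisionPostulates S M r) (a : Set W) : r a ⊆ a :=
  (hr a a).2.1

theorem nonempty_iff (hr : RevisionPostulates S M r) (a : Set W) :
    (a ∩ S).Nonempty ↔ (r a).Nonempty :=
  (hr a a).2.2.1

theorem eq_inter_of_nonempty (hr : RevisionPostulates S M r) {a : Set W}
    (h : (M ∩ a).Nonempty) : r a = M ∩ a :=
  (hr a a).2.2.2.1 h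

theorem inter_subset_of_subset (hr : RevisionPostulates S M r) {a a' : Set W} (h : a ⊆ a') :
    r a' ∩ a ⊆ r a := by
  simpa only [Set.inter_eq_right.mpr h] using (hr a' a).2.2.2.2.1

theorem subset_of_inter_nonempty (hr : RevisionPostulates S M r) {a a' : Set W} (h : a ⊆ a')
    (hne : (r a' ∩ a).Nonempty) : r a ⊆ r a' := by
  have := (hr a' a).2.2.2.2.2 hne
  rw [Set.inter_eq_right.mpr h] at this
  exact fun x hx => (this hx).1

theorem harperContraction_subset (hMS : M ⊆ S) (hr : RevisionPostulates S M r) (a : Set W) :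
    harperContraction M r a ⊆ S :=
  Set.union_subset hMS (hr.subset_consistent aᶜ)

theorem harperContraction_not_subset (hr : RevisionPostulates S M r) {a : Set W}
    (h : (S \ a).Nonempty) : ¬ harperContraction M r a ⊆ a := by
  have hS : (aᶜ ∩ S).Nonempty := by simpa only [Set.sdiff_eq, Set.inter_comm] using h
  obtain ⟨x, hx⟩ := (hr.nonempty_iff aᶜ).mp hS
  exact fun hsub => hr.subset aᶜ hx (hsub (Or.inr hx))

theorem harperContraction_eq_of_not_subset (hr : RevisionPostulates S M r) {a : Set W}
    (h : ¬ M ⊆ a) : harperContraction M r a = M := by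
  obtain ⟨m, hmM, hma⟩ := Set.not_subset.mp h
  rw [harperContraction, hr.eq_inter_of_nonempty ⟨m, hmM, hma⟩]
  exact Set.union_eq_left.mpr Set.inter_subset_left

theorem harperContraction_inter_subset (hr : RevisionPostulates S M r) (a : Set W) :
    harperContraction M r a ∩ a ⊆ M := by
  rintro x ⟨hxM | hxr, hxa⟩
  · exact hxM
  · exact absurd hxa (hr.subset aᶜ hxr)

theorem harperContraction_inter_subset_union (hr : RevisionPostulates S M r) (a b : Set W) :
    harperContraction M r (a ∩ b) ⊆ harperContraction M r a ∪ harperContraction M r b := by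
  rintro x (hxM | hxr)
  · exact Or.inl (Or.inl hxM)
  rw [Set.compl_inter] at hxr
  rcases hr.subset _ hxr with hxa | hxb
  · exact Or.inl (Or.inr (hr.inter_subset_of_subset Set.subset_union_left ⟨hxr, hxa⟩))
  · exact Or.inr (Or.inr (hr.inter_subset_of_subset Set.subset_union_right ⟨hxr, hxb⟩))

theorem harperContraction_subset_inter (hr : RevisionPostulates S M r) {a b : Set W}
    (h : ¬ harperContraction M r (a ∩ b) ⊆ a) :
    harperContraction M r a ⊆ harperContraction M r (a ∩ b) := by
  obtain ⟨x, hxM | hxr, hxa⟩ := Set.not_subset.mp h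
  · rw [hr.harperContraction_eq_of_not_subset (Set.not_subset.mpr ⟨x, hxM, hxa⟩)]
    exact subset_harperContraction _
  · rw [Set.compl_inter] at hxr
    rw [harperContraction, harperContraction, Set.compl_inter]
    exact Set.union_subset_union_right M
      (hr.subset_of_inter_nonempty Set.subset_union_left ⟨x, hxr, hxa⟩)

end RevisionPostulates

/-- Harper identity: contraction obtained from a rational revision is rational. -/
theorem harper_identity
    {W : Type*} (S M : Set W) (r : Set W → Set W)
    (hMS : M ⊆ S) (hr : RevisionPostulates S M r) :
    ContractionPostulates S M (fun a => M ∪ r aᶜ) := fun a b =>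
  ⟨hr.harperContraction_subset hMS a,
    hr.harperContraction_not_subset,
    subset_harperContraction a,
    hr.harperContraction_eq_of_not_subset,
    hr.harperContraction_inter_subset a,
    hr.harperContraction_inter_subset_union a b,
    hr.harperContraction_subset_inter⟩
end

section
/- (Representation theorem for contraction.) Assume M ⊆ S and M is nonempty, and let c : Set W → Set W. Then c satisfies the contraction postulates for (S,M) if and only if there exists a rational order ≤ for (S,M) such that c a = M ∪ Min((W \ a) ∩ S, ≤) for every sentence a ⊆ W. -/
section MinSet

variable {W : Type*} {le : W → W → Prop} {F G : Set W} {x y : W}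

theorem mem_minSet_of_forall_le (hx : x ∈ F) (h : ∀ y ∈ F, le x y) : x ∈ MinSet le F :=
  ⟨hx, fun ⟨y, hy, _, hxy⟩ => hxy (h y hy)⟩

theorem mem_minSet_of_subset (hx : x ∈ MinSet le G) (hxF : x ∈ F) (hFG : F ⊆ G) :
    x ∈ MinSet le F :=
  ⟨hxF, fun ⟨y, hy, hyx⟩ => hx.2 ⟨y, hFG hy, hyx⟩⟩

theorem le_of_mem_minSet (hx : x ∈ MinSet le F) (hy : y ∈ F) (hxy : le x y ∨ le y x) :
    le x y := by
  by_contra h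
  exact hx.2 ⟨y, hy, hxy.resolve_left h, h⟩

theorem minSet_subset_minSet_of_mem {S : Set W}
    (htot : ∀ x ∈ S, ∀ y ∈ S, le x y ∨ le y x)
    (htrans : ∀ x ∈ S, ∀ y ∈ S, ∀ z ∈ S, le x y → le y z → le x z)
    (hFG : F ⊆ G) (hGS : G ⊆ S) {m : W} (hm : m ∈ MinSet le G) (hmF : m ∈ F) :
    MinSet le F ⊆ MinSet le G := by
  intro x hx
  have hxS : x ∈ S := hGS (hFG hx.1)
  have hmS : m ∈ S := hGS hm.1
  have hxm : le x m := le_of_mem_minSet hx hmF (htot x hxS m hmS)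
  refine ⟨hFG hx.1, fun ⟨y, hyG, hyx, hxy⟩ => hm.2 ⟨y, hyG, ?_, ?_⟩⟩
  · exact htrans y (hGS hyG) x hxS m hmS hyx hxm
  · exact fun hmy => hxy (htrans x hxS m hmS y (hGS hyG) hxm hmy)

end MinSet

theorem RationalOrder.contractionPostulates {W : Type*} {le : W → W → Prop} {S M : Set W}
    (h : RationalOrder le S M) :
    ContractionPostulates S M (fun a => M ∪ MinSet le (aᶜ ∩ S)) := by
  obtain ⟨-, htrans, htot, hminS, hne⟩ := h
  have hMS : M ⊆ S := hminS ▸ fun x hx => hx.1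
  have hsubM : ∀ {a : Set W}, ∀ m ∈ M, m ∉ a → MinSet le (aᶜ ∩ S) ⊆ M := fun m hm hma =>
    hminS ▸ minSet_subset_minSet_of_mem htot htrans Set.inter_subset_right subset_rfl
      (hminS ▸ hm) ⟨hma, hMS hm⟩
  intro a b
  refine ⟨Set.union_subset hMS fun x hx => hx.1.2, ?success, Set.subset_union_left, ?vacuity,
    ?recovery, ?conj₁, ?conj₂⟩
  case success =>
    rintro ⟨x, hxS, hxa⟩ hca
    obtain ⟨w, hw⟩ := hne (aᶜ ∩ S) Set.inter_subset_right ⟨x, hxa, hxS⟩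
    exact hw.1.1 (hca (Or.inr hw))
  case vacuity =>
    intro hMa
    obtain ⟨m, hm, hma⟩ := Set.not_subset.mp hMa
    exact Set.union_eq_left.mpr (hsubM m hm hma)
  case recovery =>
    rintro x ⟨hxM | hx, hxa⟩
    exacts [hxM, absurd hxa hx.1.1]
  case conj₁ =>
    rintro x (hxM | hx)
    · exact Or.inl (Or.inl hxM)
    rcases not_and_or.mp hx.1.1 with hxa | hxb
    · refine Or.inl (Or.inr (mem_minSet_of_subset hx ⟨hxa, hx.1.2⟩ ?_))
      exact Set.inter_subset_inter_left _ (Set.compl_subset_compl.mpr Set.inter_subset_left)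
    · refine Or.inr (Or.inr (mem_minSet_of_subset hx ⟨hxb, hx.1.2⟩ ?_))
      exact Set.inter_subset_inter_left _ (Set.compl_subset_compl.mpr Set.inter_subset_right)
  case conj₂ =>
    intro hn
    obtain ⟨x, hx | hx, hxa⟩ := Set.not_subset.mp hn
    · exact Set.union_subset Set.subset_union_left ((hsubM x hx hxa).trans Set.subset_union_left)
    · refine Set.union_subset_union_right M
        (minSet_subset_minSet_of_mem htot htrans ?_ Set.inter_subset_right hx ⟨hxa, hx.1.2⟩)
      exact Set.inter_subset_inter_left _ (Set.compl_subset_compl.mpr Set.inter_subset_left)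

def revealedOrder {W : Type*} (c : Set W → Set W) (x y : W) : Prop :=
  x ∈ c ({x, y}ᶜ)

namespace ContractionPostulates

variable {W : Type*} {S M : Set W} {c : Set W → Set W} {a b : Set W} {x y z : W}

theorem subset (hc : ContractionPostulates S M c) (a : Set W) : c a ⊆ S :=
  (hc a a).1

theorem success (hc : ContractionPostulates S M c) (h : (S \ a).Nonempty) :
    ∃ z ∈ c a, z ∉ a :=
  Set.not_subset.mp ((hc a a).2.1 h)

theorem inclusion (hc : ContractionPostulates S M c) (a : Set W) : M ⊆ c a :=
  (hc a a).2.2.1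

theorem vacuity (hc : ContractionPostulates S M c) (h : ¬ M ⊆ a) : c a = M :=
  (hc a a).2.2.2.1 h

theorem recovery (hc : ContractionPostulates S M c) (a : Set W) : c a ∩ a ⊆ M :=
  (hc a a).2.2.2.2.1

theorem inter_subset_union (hc : ContractionPostulates S M c) (a b : Set W) :
    c (a ∩ b) ⊆ c a ∪ c b :=
  (hc a b).2.2.2.2.2.1

theorem subset_of_mem_of_not_mem (hc : ContractionPostulates S M c) (hab : a ⊆ b)
    (hz : z ∈ c a) (hzb : z ∉ b) : c b ⊆ c a := by
  have h := (hc b a).2.2.2.2.2.2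
  rw [Set.inter_eq_right.mpr hab] at h
  exact h fun hsub => hzb (hsub hz)

theorem revealedOrder_of_mem (hc : ContractionPostulates S M c) (hx : x ∈ c a)
    (hxa : x ∉ a) (hya : y ∉ a) : revealedOrder c x y := by
  have ha : ({x, y}ᶜ : Set W) ∩ (a ∪ {x, y}) = a := by
    ext w
    constructor
    · rintro ⟨hw, hwa | hwxy⟩
      exacts [hwa, absurd hwxy hw]
    · rintro hwa
      refine ⟨?_, Or.inl hwa⟩
      rintro (rfl | rfl)
      exacts [hxa hwa, hya hwa]
  rcases inter_subset_union hc _ _ (ha ▸ hx) with h | h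
  · exact h
  · exact inclusion hc _ (recovery hc _ ⟨h, Or.inr (Or.inl rfl)⟩)

theorem mem_of_revealedOrder (hc : ContractionPostulates S M c) (hz : z ∈ c a) (hza : z ∉ a)
    (hxa : x ∉ a) (hxz : revealedOrder c x z) : x ∈ c a := by
  have hsub : a ⊆ {x, z}ᶜ := by
    rintro w hwa (rfl | rfl)
    exacts [hxa hwa, hza hwa]
  exact subset_of_mem_of_not_mem hc hsub hz (by simp) hxz

theorem revealedOrder_total (hc : ContractionPostulates S M c) (hx : x ∈ S) :
    revealedOrder c x y ∨ revealedOrder c y x := by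
  obtain ⟨z, hz, hzxy⟩ := success hc (a := {x, y}ᶜ) ⟨x, hx, by simp⟩
  rcases Set.notMem_compl_iff.mp hzxy with rfl | rfl
  · exact Or.inl (revealedOrder_of_mem hc hz (by simp) (by simp))
  · exact Or.inr (revealedOrder_of_mem hc hz (by simp) (by simp))

theorem revealedOrder_trans (hc : ContractionPostulates S M c) (hx : x ∈ S)
    (hxy : revealedOrder c x y) (hyz : revealedOrder c y z) : revealedOrder c x z := by
  set a : Set W := {x, y, z}ᶜ
  have hxa : x ∉ a := by simp [a]
  have hya : y ∉ a := by simp [a]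
  have hza : z ∉ a := by simp [a]
  have hyx : y ∈ c a → x ∈ c a := fun hy => mem_of_revealedOrder hc hy hya hxa hxy
  have hzy : z ∈ c a → y ∈ c a := fun hz => mem_of_revealedOrder hc hz hza hya hyz
  obtain ⟨w, hw, hwa⟩ := success hc ⟨x, hx, hxa⟩
  have hxc : x ∈ c a := by
    rcases Set.notMem_compl_iff.mp hwa with rfl | rfl | rfl
    exacts [hw, hyx hw, hyx (hzy hw)]
  exact revealedOrder_of_mem hc hxc hxa hza

theorem mem_minSet_of_mem (hc : ContractionPostulates S M c) (hx : x ∈ c a) (hxa : x ∉ a) :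
    x ∈ MinSet (revealedOrder c) (aᶜ ∩ S) :=
  mem_minSet_of_forall_le ⟨hxa, subset hc a hx⟩ fun _ hy => revealedOrder_of_mem hc hx hxa hy.1

theorem minSet_revealedOrder (hc : ContractionPostulates S M c) (hM : M.Nonempty) :
    MinSet (revealedOrder c) S = M := by
  obtain ⟨m, hm⟩ := hM
  refine Set.Subset.antisymm (fun x ⟨_, hxmin⟩ => ?_) fun n hn => ?_
  · by_contra hxM
    have hvac : c {x, m}ᶜ = M := vacuity hc fun h => h hm (by simp)
    have hmS : m ∈ S := subset hc ∅ (inclusion hc ∅ hm)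
    refine hxmin ⟨m, hmS, inclusion hc _ hm, fun hxm => hxM ?_⟩
    rwa [revealedOrder, hvac] at hxm
  · exact ⟨subset hc _ (inclusion hc ∅ hn), fun ⟨_, _, _, hny⟩ => hny (inclusion hc _ hn)⟩

theorem rationalOrder_revealedOrder (hc : ContractionPostulates S M c) (hM : M.Nonempty) :
    RationalOrder (revealedOrder c) S M := by
  refine ⟨fun x hx => (revealedOrder_total hc hx).elim id id,
    fun x hx _ _ _ _ hxy hyz => revealedOrder_trans hc hx hxy hyz,
    fun x hx _ _ => revealedOrder_total hc hx, minSet_revealedOrder hc hM, ?_⟩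
  rintro F hFS ⟨x, hx⟩
  obtain ⟨w, hw, hwF⟩ := success hc (a := Fᶜ) ⟨x, hFS hx, not_not_intro hx⟩
  have hmin := mem_minSet_of_mem hc hw hwF
  rw [compl_compl, Set.inter_eq_left.mpr hFS] at hmin
  exact ⟨w, hmin⟩

theorem eq_union_minSet (hc : ContractionPostulates S M c) (a : Set W) :
    c a = M ∪ MinSet (revealedOrder c) (aᶜ ∩ S) := by
  refine Set.Subset.antisymm (fun x hx => ?_) (Set.union_subset (inclusion hc a) ?_)
  · by_cases hxa : x ∈ a
    · exact Or.inl (recovery hc a ⟨hx, hxa⟩)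
    · exact Or.inr (mem_minSet_of_mem hc hx hxa)
  · rintro x hx
    obtain ⟨z, hz, hza⟩ := success hc ⟨x, hx.1.2, hx.1.1⟩
    have hxz : revealedOrder c x z :=
      le_of_mem_minSet hx ⟨hza, subset hc a hz⟩ (revealedOrder_total hc hx.1.2)
    exact mem_of_revealedOrder hc hz hza hx.1.1 hxz

end ContractionPostulates

theorem contraction_representation_general
    {W : Type*} (S M : Set W) (c : Set W → Set W)
    (hMne : M.Nonempty) :
    ContractionPostulates S M c ↔
      ∃ le : W → W → Prop, RationalOrder le S M ∧
        ∀ a : Set W, c a = M ∪ MinSet le (aᶜ ∩ S) := by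
  constructor
  · intro hc
    exact ⟨revealedOrder c, ContractionPostulates.rationalOrder_revealedOrder hc hMne,
      ContractionPostulates.eq_union_minSet hc⟩
  · rintro ⟨le, hle, hrep⟩
    obtain rfl : c = fun a => M ∪ MinSet le (aᶜ ∩ S) := funext hrep
    exact RationalOrder.contractionPostulates hle

/-- Representation theorem for contraction. -/
theorem contraction_representation
    {W : Type*} (S M : Set W) (c : Set W → Set W)
    (hMS : M ⊆ S) (hMne : M.Nonempty) :
    ContractionPostulates S M c ↔
      ∃ le : W → W → Prop, RationalOrder le S M ∧
        ∀ a : Set W, c a = M ∪ MinSet le (aᶜ ∩ S) :=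
  contraction_representation_general S M c hMne
end

section
/- Assume IC is empty, so S = W, and let M ⊆ W be the set of models of KB. Let r : Set W → Set W satisfy the revision postulates for (W,M), and let B = {p ⊆ W : M ⊆ p} be the belief set of KB. Define * : Set W → Set (Set W) by * a = {p ⊆ W : r a ⊆ p}. Then * satisfies the AGM revision postulates for B, i.e. (*1)–(*5), (*7) and (*8) all hold. -/
/-- The consequence operator: sentences true in every common model of `X`. -/
def Cn {W : Type*} (X : Set (Set W)) : Set (Set W) := {p | ⋂₀ X ⊆ p}

/-- AGM expansion of a set of sentences `X` by a sentence `a`. -/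
def Exp {W : Type*} (X : Set (Set W)) (a : Set W) : Set (Set W) := Cn (X ∪ {a})

/-- `star` satisfies the AGM revision postulates for belief set `B`. -/
def AGMRevisionPostulates {W : Type*} (B : Set (Set W))
    (star : Set W → Set (Set W)) : Prop :=
  ∀ a b : Set W,
    star a = Cn (star a) ∧
    a ∈ star a ∧
    star a ⊆ Exp B a ∧
    (aᶜ ∉ B → Exp B a ⊆ star a) ∧
    ((∅ : Set W) ∈ star a ↔ a = ∅) ∧
    star (a ∩ b) ⊆ Exp (star a) b ∧
    (bᶜ ∉ star a → Exp (star a) b ⊆ star (a ∩ b))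

/-! The sentences `{p | s ⊆ p}` form the theory of the model set `s`. Theories are deductively
closed, expanding the theory of `s` by `a` gives the theory of `s ∩ a`, and inclusion between
theories is reverse inclusion between model sets (`Set.Ici_subset_Ici`). Read through this
dictionary, each AGM postulate for the theory of `r a` is the matching model-level postulate for
`r`: (*3) and (*4) come from vacuity, (*5) from consistency, (*7) and (*8) from (∔6) and (∔7). -/

open Set

section Theories

variable {W : Type*}

theorem sInter_setOf_superset (s : Set W) : ⋂₀ {p | s ⊆ p} = s :=
  (sInter_subset_of_mem (subset_refl s)).antisymm fun _ hx _ hp => hp hx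

theorem Cn_setOf_superset (s : Set W) : Cn {p | s ⊆ p} = {p | s ⊆ p} := by
  rw [Cn, sInter_setOf_superset]

theorem Exp_setOf_superset (s a : Set W) : Exp {p | s ⊆ p} a = {p | s ∩ a ⊆ p} := by
  rw [Exp, Cn, sInter_union, sInter_singleton, sInter_setOf_superset]

theorem compl_mem_setOf_superset_iff {s a : Set W} :
    aᶜ ∈ {p | s ⊆ p} ↔ ¬(s ∩ a).Nonempty := by
  rw [mem_ofPred_eq, subset_compl_iff_disjoint_right, disjoint_iff_inter_eq_empty,
    not_nonempty_iff_eq_empty]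

end Theories

namespace RevisionPostulates

variable {W : Type*} {M : Set W} {r : Set W → Set W}

theorem inter_subset (hr : RevisionPostulates univ M r) (a : Set W) : M ∩ a ⊆ r a := by
  rcases (M ∩ a).eq_empty_or_nonempty with hMa | hMa
  · exact hMa ▸ empty_subset _
  · exact ((hr a a).2.2.2.1 hMa).ge

theorem eq_empty_iff (hr : RevisionPostulates univ M r) (a : Set W) : r a = ∅ ↔ a = ∅ := by
  simpa only [inter_univ, not_nonempty_iff_eq_empty] using (hr a a).2.2.1.not.symm

end RevisionPostulates

/-- A rational model-level revision induces an AGM revision on belief sets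
(when `IC` is empty, i.e. `S = W`). -/
theorem revision_induces_AGM_revision
    {W : Type*} (M : Set W) (r : Set W → Set W)
    (hr : RevisionPostulates Set.univ M r) :
    AGMRevisionPostulates {p : Set W | M ⊆ p}
      (fun a => {p : Set W | r a ⊆ p}) := by
  intro a b
  obtain ⟨-, success, -, vacuity, superexpansion, subexpansion⟩ := hr a b
  simp only [Exp_setOf_superset, compl_mem_setOf_superset_iff, not_not]
  refine ⟨(Cn_setOf_superset _).symm, success, Ici_subset_Ici.mpr (hr.inter_subset a),
    fun hMa => Ici_subset_Ici.mpr (vacuity hMa).le, ?_, Ici_subset_Ici.mpr superexpansion,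
    fun hrab => Ici_subset_Ici.mpr (subexpansion hrab)⟩
  rw [mem_ofPred_eq, subset_empty_iff, hr.eq_empty_iff]
end
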